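/- arXiv:2510.08523 — 2 statements merged into one kernel-verified Lean document; each statement's English description precedes it below -/
import Mathlib

section
/- Let $A \in \mathbb{F}_2^{r_B \times n_B}$ and $D \in \mathbb{F}_2^{r_D \times n_D}$ and identify $\mathbb{F}_2^{n_B} \otimes \mathbb{F}_2^{n_D}$ with $n_B \times n_D$ matrices $e$ over $\mathbb{F}_2$. Let the tensor check be $H(e) = (Ae, eD^T)$. Suppose every nonzero element of $\ker A$ has Hamming weight at least $d_B$ and every nonzero element of $\ker D$ has weight at least $d_D$. If $e$ is such that no column of $e$ lies in $\ker A \setminus \{0\}$ and no row of $e$ lies in $\ker D \setminus \{0\}$, then the number of nonzero columns of $e$ times the number of nonzero rows of $e$ is at least $|e|$, and $|H(e)| \geq (\text{number of nonzero rows of } e) + (\text{number of nonzero columns of } e) \geq 2\sqrt{|e|}$. -/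
/-!
Let `r` and `c` count the nonzero rows and columns of `e`. A nonzero entry of `e` sits in a
nonzero row and a nonzero column, so `|e| ≤ r * c`. A nonzero row of `e` is not in `ker D`, so
the same row of `e Dᵀ` is nonzero and contributes at least one to `|e Dᵀ|`; symmetrically each
nonzero column of `e` contributes to `|A e|`. AM-GM turns `|e| ≤ r * c` into `2 √|e| ≤ r + c`.
-/

/-- Total Hamming weight (number of nonzero entries) of a matrix over `F₂`. -/
def matWeight {α β : Type*} [Fintype α] [Fintype β]
    (M : Matrix α β (ZMod 2)) : ℕ :=
  (Finset.univ.filter fun p : α × β => M p.1 p.2 ≠ 0).card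

open Finset

lemma Real.two_mul_sqrt_le_add {x r c : ℝ} (hx : 0 ≤ x) (h : x ≤ r * c) (hr : 0 ≤ r)
    (hc : 0 ≤ c) : 2 * √x ≤ r + c := by
  nlinarith [Real.sq_sqrt hx, Real.sqrt_nonneg x, sq_nonneg (r - c)]

namespace Matrix

variable {α β γ R : Type*} [Fintype α] [Fintype β] [Fintype γ]

section nonzero
variable [DecidableEq R]

/-- The instance is supplied explicitly: instance search does not unfold `Matrix` to see that
`M i` is a function. -/
def nonzeroRows [Zero R] (M : Matrix α β R) : Finset α :=
  @filter _ (fun i => M i ≠ 0) (fun _ => instDecidableNot) univ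

def nonzeroCols [Zero R] (M : Matrix α β R) : Finset β :=
  nonzeroRows Mᵀ

@[simp]
lemma mem_nonzeroRows [Zero R] {M : Matrix α β R} {i : α} : i ∈ nonzeroRows M ↔ M i ≠ 0 := by
  simp [nonzeroRows]

lemma card_nonzeroRows_le_card_nonzeroRows_mul_transpose [NonUnitalCommSemiring R]
    (M : Matrix α β R) (D : Matrix γ β R) (h : ∀ i, M i = 0 ∨ D *ᵥ M i ≠ 0) :
    #(nonzeroRows M) ≤ #(nonzeroRows (M * Dᵀ)) := by
  refine card_le_card fun i hi ↦ ?_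
  rw [mem_nonzeroRows] at hi
  rw [mem_nonzeroRows, mul_apply_eq_vecMul, vecMul_transpose]
  exact (h i).resolve_left hi

end nonzero

lemma matWeight_transpose (M : Matrix α β (ZMod 2)) : matWeight Mᵀ = matWeight M := by
  unfold matWeight
  exact card_equiv (Equiv.prodComm β α) fun _ ↦ by simp only [mem_filter, mem_univ, true_and]; rfl

lemma matWeight_le_card_nonzeroRows_mul_card_nonzeroCols (M : Matrix α β (ZMod 2)) :
    matWeight M ≤ #(nonzeroRows M) * #(nonzeroCols M) := by
  rw [← card_product]
  refine card_le_card fun p hp ↦ ?_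
  simp only [mem_filter, mem_univ, true_and] at hp
  simp only [nonzeroCols, mem_product, mem_nonzeroRows]
  exact ⟨Function.ne_iff.mpr ⟨p.2, hp⟩, Function.ne_iff.mpr ⟨p.1, hp⟩⟩

lemma card_nonzeroRows_le_matWeight (M : Matrix α β (ZMod 2)) :
    #(nonzeroRows M) ≤ matWeight M := by
  refine card_le_card_of_surjOn Prod.fst fun i hi ↦ ?_
  obtain ⟨j, hj⟩ := Function.ne_iff.mp (mem_nonzeroRows.mp hi)
  exact ⟨(i, j), by simpa [matWeight] using hj, rfl⟩

lemma card_nonzeroRows_le_matWeight_mul_transpose (M : Matrix α β (ZMod 2))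
    (D : Matrix γ β (ZMod 2)) (h : ∀ i, M i = 0 ∨ D *ᵥ M i ≠ 0) :
    #(nonzeroRows M) ≤ matWeight (M * Dᵀ) :=
  (card_nonzeroRows_le_card_nonzeroRows_mul_transpose M D h).trans
    (card_nonzeroRows_le_matWeight _)

lemma card_nonzeroCols_le_matWeight_mul (A : Matrix γ α (ZMod 2)) (M : Matrix α β (ZMod 2))
    (h : ∀ j, Mᵀ j = 0 ∨ A *ᵥ Mᵀ j ≠ 0) :
    #(nonzeroCols M) ≤ matWeight (A * M) := by
  rw [← matWeight_transpose, transpose_mul]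
  exact card_nonzeroRows_le_matWeight_mul_transpose Mᵀ A h

end Matrix

open Matrix

theorem tensor_check_quadratic_soundness_general
    {rB nB rD nD : ℕ}
    (A : Matrix (Fin rB) (Fin nB) (ZMod 2))
    (D : Matrix (Fin rD) (Fin nD) (ZMod 2))
    (e : Matrix (Fin nB) (Fin nD) (ZMod 2))
    (hcolOK : ∀ j, e.transpose j = 0 ∨ A.mulVec (e.transpose j) ≠ 0)
    (hrowOK : ∀ i, e i = 0 ∨ D.mulVec (e i) ≠ 0) :
    matWeight e ≤ (@Finset.filter _ (fun i : Fin nB => e i ≠ 0) (fun _ => instDecidableNot) Finset.univ).card *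
        (@Finset.filter _ (fun j : Fin nD => e.transpose j ≠ 0) (fun _ => instDecidableNot) Finset.univ).card ∧
    (@Finset.filter _ (fun i : Fin nB => e i ≠ 0) (fun _ => instDecidableNot) Finset.univ).card +
        (@Finset.filter _ (fun j : Fin nD => e.transpose j ≠ 0) (fun _ => instDecidableNot) Finset.univ).card ≤
      matWeight (A * e) + matWeight (e * D.transpose) ∧
    2 * Real.sqrt (matWeight e) ≤
      ((@Finset.filter _ (fun i : Fin nB => e i ≠ 0) (fun _ => instDecidableNot) Finset.univ).card +
        (@Finset.filter _ (fun j : Fin nD => e.transpose j ≠ 0) (fun _ => instDecidableNot) Finset.univ).card : ℝ) := by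
  change matWeight e ≤ #(nonzeroRows e) * #(nonzeroCols e) ∧
    #(nonzeroRows e) + #(nonzeroCols e) ≤ matWeight (A * e) + matWeight (e * Dᵀ) ∧
    2 * √(matWeight e) ≤ (#(nonzeroRows e) + #(nonzeroCols e) : ℝ)
  have hweight := matWeight_le_card_nonzeroRows_mul_card_nonzeroCols e
  have hcols := card_nonzeroCols_le_matWeight_mul A e hcolOK
  have hrows := card_nonzeroRows_le_matWeight_mul_transpose e D hrowOK
  refine ⟨hweight, by omega, ?_⟩
  exact Real.two_mul_sqrt_le_add (Nat.cast_nonneg _) (by exact_mod_cast hweight)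
    (Nat.cast_nonneg _) (Nat.cast_nonneg _)

/-- Tensor code quadratic soundness, case 1: if no column of `e` is a nonzero
codeword of `ker A` and no row of `e` is a nonzero codeword of `ker D`, then
(#nonzero rows)·(#nonzero cols) ≥ |e|, and
`|H(e)| ≥ (#nonzero rows) + (#nonzero cols) ≥ 2√|e|`. -/
theorem tensor_check_quadratic_soundness
    {rB nB rD nD dB dD : ℕ}
    (A : Matrix (Fin rB) (Fin nB) (ZMod 2))
    (D : Matrix (Fin rD) (Fin nD) (ZMod 2))
    (hA : ∀ b : Fin nB → ZMod 2, A.mulVec b = 0 → b ≠ 0 → dB ≤ hammingNorm b)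
    (hD : ∀ d : Fin nD → ZMod 2, D.mulVec d = 0 → d ≠ 0 → dD ≤ hammingNorm d)
    (e : Matrix (Fin nB) (Fin nD) (ZMod 2))
    (hcolOK : ∀ j, e.transpose j = 0 ∨ A.mulVec (e.transpose j) ≠ 0)
    (hrowOK : ∀ i, e i = 0 ∨ D.mulVec (e i) ≠ 0) :
    matWeight e ≤ (@Finset.filter _ (fun i : Fin nB => e i ≠ 0) (fun _ => instDecidableNot) Finset.univ).card *
        (@Finset.filter _ (fun j : Fin nD => e.transpose j ≠ 0) (fun _ => instDecidableNot) Finset.univ).card ∧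
    (@Finset.filter _ (fun i : Fin nB => e i ≠ 0) (fun _ => instDecidableNot) Finset.univ).card +
        (@Finset.filter _ (fun j : Fin nD => e.transpose j ≠ 0) (fun _ => instDecidableNot) Finset.univ).card ≤
      matWeight (A * e) + matWeight (e * D.transpose) ∧
    2 * Real.sqrt (matWeight e) ≤
      ((@Finset.filter _ (fun i : Fin nB => e i ≠ 0) (fun _ => instDecidableNot) Finset.univ).card +
        (@Finset.filter _ (fun j : Fin nD => e.transpose j ≠ 0) (fun _ => instDecidableNot) Finset.univ).card : ℝ) :=
  tensor_check_quadratic_soundness_general A D e hcolOK hrowOK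
end

section
/- Suppose a vector $l \in \mathbb{F}_2^{n_1} \oplus \mathbb{F}_2^{n_2}$ decomposes as $l = (l_C + \Gamma x, \; \partial x)$ for linear maps $\Gamma : \mathbb{F}_2^s \to \mathbb{F}_2^{n_1}$, $\partial : \mathbb{F}_2^s \to \mathbb{F}_2^{n_2}$ and vectors $l_C \in \mathbb{F}_2^{n_1}$, $x \in \mathbb{F}_2^s$. Assume: (i) $|l_C| \geq d$; (ii) the maximum row/column weight of $\Gamma$ is at most $w$; (iii) $\partial$ has linear soundness $\rho$ up to $t \geq d$, meaning for all $y$ with $|\partial y| \leq t$, $|\partial y| \geq \rho \cdot d(y, \ker \partial)$; and (iv) $|\Gamma x| = \min_{u \in \ker\partial} |\Gamma(x + u)|$. Then $|l| = |l_C + \Gamma x| + |\partial x| \geq \min(1, \rho/w) \cdot d$. -/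
lemma hn_add_le {n : ℕ} (u v : Fin n → ZMod 2) :
    hammingNorm (u + v) ≤ hammingNorm u + hammingNorm v := by
  classical
  unfold hammingNorm
  calc (Finset.univ.filter fun i => (u + v) i ≠ 0).card
      ≤ ((Finset.univ.filter fun i => u i ≠ 0) ∪ (Finset.univ.filter fun i => v i ≠ 0)).card := by
        apply Finset.card_le_card
        intro i hi
        simp only [Finset.mem_filter, Finset.mem_union, Finset.mem_univ, true_and] at *
        by_contra h
        push_neg at h
        exact hi (by simp [Pi.add_apply, h.1, h.2])
    _ ≤ _ := Finset.card_union_le _ _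

lemma mulVec_hn_le {n s w : ℕ} (Γ : Matrix (Fin n) (Fin s) (ZMod 2))
    (hcol : ∀ j, (Finset.univ.filter fun i => Γ i j ≠ 0).card ≤ w)
    (y : Fin s → ZMod 2) : hammingNorm (Γ.mulVec y) ≤ w * hammingNorm y := by
  classical
  unfold hammingNorm
  calc (Finset.univ.filter fun i => Γ.mulVec y i ≠ 0).card
      ≤ ((Finset.univ.filter fun j => y j ≠ 0).biUnion
          (fun j => Finset.univ.filter fun i => Γ i j ≠ 0)).card := by
        apply Finset.card_le_card
        intro i hi
        simp only [Finset.mem_filter, Finset.mem_univ, true_and] at hi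
        have : ∃ j, y j ≠ 0 ∧ Γ i j ≠ 0 := by
          by_contra h
          push_neg at h
          apply hi
          unfold Matrix.mulVec dotProduct
          apply Finset.sum_eq_zero
          intro j _
          by_cases hy : y j = 0
          · simp [hy]
          · simp [h j hy]
        obtain ⟨j, hj1, hj2⟩ := this
        simp only [Finset.mem_biUnion, Finset.mem_filter, Finset.mem_univ, true_and]
        exact ⟨j, hj1, hj2⟩
    _ ≤ ∑ j ∈ Finset.univ.filter fun j => y j ≠ 0,
          (Finset.univ.filter fun i => Γ i j ≠ 0).card := Finset.card_biUnion_le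
    _ ≤ ∑ _j ∈ Finset.univ.filter fun j => y j ≠ 0, w := Finset.sum_le_sum fun j _ => hcol j
    _ = (Finset.univ.filter fun j => y j ≠ 0).card * w := by rw [Finset.sum_const, smul_eq_mul]
    _ = w * _ := Nat.mul_comm _ _

/-- Core weight bound for merged-code dressed logicals: if `l = (l_C + Γx, ∂x)` with
`|l_C| ≥ d`, `Γ` of maximum row/column weight `≤ w`, `∂` having linear soundness `ρ`
up to `t ≥ d`, and `x` minimizing `|Γ(x+u)|` over `u ∈ ker ∂`, then
`|l_C + Γx| + |∂x| ≥ min(1, ρ/w)·d`. -/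
theorem merged_code_weight_bound
    {n1 n2 s d t w : ℕ} (ρ : ℝ)
    (Γ : Matrix (Fin n1) (Fin s) (ZMod 2))
    (P : Matrix (Fin n2) (Fin s) (ZMod 2))
    (lC : Fin n1 → ZMod 2) (x : Fin s → ZMod 2)
    (hlC : d ≤ hammingNorm lC)
    (hrowΓ : ∀ i, (Finset.univ.filter fun j => Γ i j ≠ 0).card ≤ w)
    (hcolΓ : ∀ j, (Finset.univ.filter fun i => Γ i j ≠ 0).card ≤ w)
    (htd : d ≤ t)
    (hsound : ∀ y : Fin s → ZMod 2, hammingNorm (P.mulVec y) ≤ t →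
      ρ * sInf {k | ∃ u, P.mulVec u = 0 ∧ hammingNorm (y + u) = k} ≤
        (hammingNorm (P.mulVec y) : ℝ))
    (hmin : ∀ u : Fin s → ZMod 2, P.mulVec u = 0 →
      hammingNorm (Γ.mulVec x) ≤ hammingNorm (Γ.mulVec (x + u))) :
    min 1 (ρ / w) * d ≤
      ((hammingNorm (lC + Γ.mulVec x) + hammingNorm (P.mulVec x) : ℕ) : ℝ) := by
  set a := hammingNorm (lC + Γ.mulVec x) with ha
  set b := hammingNorm (P.mulVec x) with hb
  set m : ℝ := min 1 (ρ / w) with hm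
  by_cases hm0 : m ≤ 0
  · calc m * d ≤ 0 := mul_nonpos_of_nonpos_of_nonneg hm0 (Nat.cast_nonneg d)
      _ ≤ _ := Nat.cast_nonneg _
  push_neg at hm0
  have hmρw : m ≤ ρ / w := min_le_right _ _
  have hm1 : m ≤ 1 := min_le_left _ _
  have hρw : (0:ℝ) < ρ / w := lt_of_lt_of_le hm0 hmρw
  have hw0 : w ≠ 0 := by
    rintro rfl
    simp at hρw
  have hwR : (0:ℝ) < w := by positivity
  have hρ : (0:ℝ) < ρ := by
    by_contra h
    push_neg at h
    have : ρ / w ≤ 0 := div_nonpos_of_nonpos_of_nonneg h hwR.le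
    linarith
  by_cases hbd : d ≤ b
  · have hd : (d:ℝ) ≤ (b:ℝ) := Nat.cast_le.mpr hbd
    have ha0 : (0:ℝ) ≤ (a:ℝ) := Nat.cast_nonneg a
    have hmd : m * d ≤ 1 * d := mul_le_mul_of_nonneg_right hm1 (Nat.cast_nonneg d)
    push_cast
    linarith
  push_neg at hbd
  have hbt : b ≤ t := le_trans (Nat.le_of_lt hbd) htd
  have hS := hsound x hbt
  set S : Set ℕ := {k | ∃ u, P.mulVec u = 0 ∧ hammingNorm (x + u) = k} with hSdef
  have hSne : S.Nonempty := ⟨hammingNorm (x + 0), 0, Matrix.mulVec_zero P, rfl⟩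
  obtain ⟨u₀, hu₀, hDu⟩ : sInf S ∈ S := Nat.sInf_mem hSne
  set D := sInf S with hD
  -- |Γx| ≤ w * D
  have hΓxD : hammingNorm (Γ.mulVec x) ≤ w * D := by
    calc hammingNorm (Γ.mulVec x) ≤ hammingNorm (Γ.mulVec (x + u₀)) := hmin u₀ hu₀
      _ ≤ w * hammingNorm (x + u₀) := mulVec_hn_le Γ hcolΓ _
      _ = w * D := by rw [hDu]
  -- d ≤ a + |Γx|
  have hdA : d ≤ a + hammingNorm (Γ.mulVec x) := by
    calc d ≤ hammingNorm lC := hlC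
      _ = hammingNorm ((lC + Γ.mulVec x) + Γ.mulVec x) := by
        congr 1
        ext i
        simp only [Pi.add_apply]
        have : Γ.mulVec x i + Γ.mulVec x i = 0 := by
          have := ZMod.natCast_self 2
          generalize Γ.mulVec x i = z
          fin_cases z <;> rfl
        rw [add_assoc, this, add_zero]
      _ ≤ a + hammingNorm (Γ.mulVec x) := hn_add_le _ _
  -- real arithmetic
  have hG : (0:ℝ) ≤ (hammingNorm (Γ.mulVec x) : ℝ) := Nat.cast_nonneg _
  have hρD : ρ * D ≤ (b : ℝ) := hS
  have key : (ρ / w) * (hammingNorm (Γ.mulVec x) : ℝ) ≤ (b:ℝ) := by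
    have h1 : (hammingNorm (Γ.mulVec x) : ℝ) ≤ (w:ℝ) * (D:ℝ) := by exact_mod_cast hΓxD
    calc (ρ / w) * (hammingNorm (Γ.mulVec x) : ℝ) ≤ (ρ / w) * ((w:ℝ) * D) :=
          mul_le_mul_of_nonneg_left h1 hρw.le
      _ = ρ * D := by field_simp
      _ ≤ (b:ℝ) := hρD
  have hdA' : (d:ℝ) ≤ (a:ℝ) + (hammingNorm (Γ.mulVec x) : ℝ) := by exact_mod_cast hdA
  have ha0 : (0:ℝ) ≤ (a:ℝ) := Nat.cast_nonneg _
  calc m * d ≤ m * ((a:ℝ) + (hammingNorm (Γ.mulVec x) : ℝ)) :=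
        mul_le_mul_of_nonneg_left hdA' hm0.le
    _ = m * a + m * (hammingNorm (Γ.mulVec x) : ℝ) := mul_add _ _ _
    _ ≤ 1 * a + (ρ / w) * (hammingNorm (Γ.mulVec x) : ℝ) := by
        gcongr
    _ ≤ (a:ℝ) + (b:ℝ) := by
        rw [one_mul]
        linarith [key]
    _ = ((a + b : ℕ) : ℝ) := by push_cast; ring
end
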